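/- For any two transformation data (f, γ₁, γ₂, γ₃) and (f̄, γ̄₁, γ̄₂, γ̄₃) and any pair of coefficient functions (A, C₂): applying the transformation rules (t1), (t4) with (f, γ₁, γ₂, γ₃) and then applying them with (f̄, γ̄₁, γ̄₂, γ̄₃) produces the same pair of coefficient functions as the single application with the composite datum (f̄∘f, γ̄₁∘f + γ₁, γ̄₂∘f + γ₂, γ̄₃∘f + γ₃); moreover the identity datum (id, 0, 0, 0) acts trivially. Hence rule (t4) defines a consistent group action on pairs (A, C₂). -/

import Mathlib

/-- Transformation rule (t1) for the non-minimal coupling coefficient `A`: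
`Ā(f x) = exp(−(n−2)·γ₁ x)·A x`. -/
noncomputable def transA (n : ℕ) (f : ℝ ≃ ℝ) (γ₁ A : ℝ → ℝ) : ℝ → ℝ :=
  fun y => Real.exp (-((n : ℝ) - 2) * γ₁ (f.symm y)) * A (f.symm y)

/-- Transformation rule (t4) for the coefficient `C₂`:
`C̄₂(f x)·f' x = exp(−(n−2)·γ₁ x)·(C₂ x + A x·((n−1)·γ₂' x − γ₃' x))`. -/
noncomputable def transC2 (n : ℕ) (f : ℝ ≃ ℝ) (γ₁ γ₂ γ₃ A C₂ : ℝ → ℝ) : ℝ → ℝ :=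
  fun y => Real.exp (-((n : ℝ) - 2) * γ₁ (f.symm y)) *
    (C₂ (f.symm y) + A (f.symm y) *
      (((n : ℝ) - 1) * deriv γ₂ (f.symm y) - deriv γ₃ (f.symm y)))
    / deriv (⇑f) (f.symm y)

/-! The exponential factors multiply because the conformal weights `γ̄₁ ∘ f + γ₁` add, and the
chain rule `(γ̄ ∘ f + γ)' = (γ̄' ∘ f)·f' + γ'` produces exactly the extra factor `f'` that
turns the division by `f̄' ∘ f` in the second step into the division by `(f̄ ∘ f)'`. -/

section

variable (n : ℕ) (f fb : ℝ ≃ ℝ) (γ₁ γ₂ γ₃ g₁ g₂ g₃ A C₂ : ℝ → ℝ)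

theorem transA_apply (x : ℝ) :
    transA n f γ₁ A (f x) = Real.exp (-((n : ℝ) - 2) * γ₁ x) * A x := by
  simp only [transA, Equiv.symm_apply_apply]

theorem transC2_apply (x : ℝ) :
    transC2 n f γ₁ γ₂ γ₃ A C₂ (f x) = Real.exp (-((n : ℝ) - 2) * γ₁ x) *
      (C₂ x + A x * (((n : ℝ) - 1) * deriv γ₂ x - deriv γ₃ x)) / deriv (⇑f) x := by
  simp only [transC2, Equiv.symm_apply_apply]

theorem transA_trans :
    transA n fb g₁ (transA n f γ₁ A) = transA n (f.trans fb) (g₁ ∘ ⇑f + γ₁) A := by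
  funext y
  obtain ⟨x, rfl⟩ := (f.trans fb).surjective y
  rw [transA_apply, Equiv.trans_apply, transA_apply, transA_apply, Pi.add_apply,
    Function.comp_apply, mul_add, Real.exp_add]
  ring

theorem transA_refl : transA n (Equiv.refl ℝ) 0 A = A := by
  funext y
  simp [transA]

theorem transC2_refl : transC2 n (Equiv.refl ℝ) 0 0 0 A C₂ = C₂ := by
  funext y
  simp [transC2, deriv_id']

end

theorem deriv_comp_add {f g γ : ℝ → ℝ} {x : ℝ} (hg : DifferentiableAt ℝ g (f x))
    (hf : DifferentiableAt ℝ f x) (hγ : DifferentiableAt ℝ γ x) :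
    deriv (g ∘ f + γ) x = deriv g (f x) * deriv f x + deriv γ x :=
  ((hg.hasDerivAt.comp x hf.hasDerivAt).add hγ.hasDerivAt).deriv

theorem transC2_trans (n : ℕ) {f fb : ℝ ≃ ℝ} {γ₁ γ₂ γ₃ g₁ g₂ g₃ : ℝ → ℝ}
    (hf : Differentiable ℝ ⇑f) (hf' : ∀ x, deriv (⇑f) x ≠ 0) (hfb : Differentiable ℝ ⇑fb)
    (hγ₂ : Differentiable ℝ γ₂) (hγ₃ : Differentiable ℝ γ₃)
    (hg₂ : Differentiable ℝ g₂) (hg₃ : Differentiable ℝ g₃) (A C₂ : ℝ → ℝ) :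
    transC2 n fb g₁ g₂ g₃ (transA n f γ₁ A) (transC2 n f γ₁ γ₂ γ₃ A C₂)
      = transC2 n (f.trans fb) (g₁ ∘ ⇑f + γ₁) (g₂ ∘ ⇑f + γ₂) (g₃ ∘ ⇑f + γ₃) A C₂ := by
  funext y
  obtain ⟨x, rfl⟩ := (f.trans fb).surjective y
  have hderiv : deriv (⇑(f.trans fb)) x = deriv (⇑fb) (f x) * deriv (⇑f) x := by
    rw [Equiv.coe_trans]
    exact deriv_comp x (hfb (f x)) (hf x)
  rw [transC2_apply, Equiv.trans_apply, transC2_apply, transA_apply, transC2_apply, hderiv,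
    deriv_comp_add (hg₂ _) (hf x) (hγ₂ x), deriv_comp_add (hg₃ _) (hf x) (hγ₃ x),
    Pi.add_apply, Function.comp_apply, mul_add (-((n : ℝ) - 2)), Real.exp_add]
  have := hf' x
  field_simp
  ring

theorem transC2_group_action_general (n : ℕ)
    (f fb : ℝ ≃ ℝ) (γ₁ γ₂ γ₃ g₁ g₂ g₃ : ℝ → ℝ)
    (hf : Differentiable ℝ ⇑f) (hf' : ∀ x, deriv (⇑f) x ≠ 0)
    (hfb : Differentiable ℝ ⇑fb)
    (hγ₂ : Differentiable ℝ γ₂) (hγ₃ : Differentiable ℝ γ₃)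
    (hg₂ : Differentiable ℝ g₂) (hg₃ : Differentiable ℝ g₃)
    (A C₂ : ℝ → ℝ) :
    (transA n fb g₁ (transA n f γ₁ A) = transA n (f.trans fb) (g₁ ∘ ⇑f + γ₁) A ∧
      transC2 n fb g₁ g₂ g₃ (transA n f γ₁ A) (transC2 n f γ₁ γ₂ γ₃ A C₂)
        = transC2 n (f.trans fb) (g₁ ∘ ⇑f + γ₁) (g₂ ∘ ⇑f + γ₂) (g₃ ∘ ⇑f + γ₃) A C₂) ∧
    (transA n (Equiv.refl ℝ) 0 A = A ∧
      transC2 n (Equiv.refl ℝ) 0 0 0 A C₂ = C₂) :=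
  ⟨⟨transA_trans n f fb γ₁ g₁ A, transC2_trans n hf hf' hfb hγ₂ hγ₃ hg₂ hg₃ A C₂⟩,
    transA_refl n A, transC2_refl n A C₂⟩

/-- Rules (t1) and (t4) define a consistent group action on pairs `(A, C₂)`:
applying them with `(f, γ₁, γ₂, γ₃)` and then with `(f̄, γ̄₁, γ̄₂, γ̄₃)` agrees
with the single application of the composite datum
`(f̄∘f, γ̄₁∘f + γ₁, γ̄₂∘f + γ₂, γ̄₃∘f + γ₃)`, and `(id, 0, 0, 0)` acts trivially. -/
theorem transC2_group_action (n : ℕ) (hn : 3 ≤ n)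
    (f fb : ℝ ≃ ℝ) (γ₁ γ₂ γ₃ g₁ g₂ g₃ : ℝ → ℝ)
    (hf : Differentiable ℝ ⇑f) (hf' : ∀ x, deriv (⇑f) x ≠ 0)
    (hfb : Differentiable ℝ ⇑fb) (hfb' : ∀ x, deriv (⇑fb) x ≠ 0)
    (hγ₁ : Differentiable ℝ γ₁) (hγ₂ : Differentiable ℝ γ₂) (hγ₃ : Differentiable ℝ γ₃)
    (hg₁ : Differentiable ℝ g₁) (hg₂ : Differentiable ℝ g₂) (hg₃ : Differentiable ℝ g₃)
    (A C₂ : ℝ → ℝ) :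
    (transA n fb g₁ (transA n f γ₁ A) = transA n (f.trans fb) (g₁ ∘ ⇑f + γ₁) A ∧
      transC2 n fb g₁ g₂ g₃ (transA n f γ₁ A) (transC2 n f γ₁ γ₂ γ₃ A C₂)
        = transC2 n (f.trans fb) (g₁ ∘ ⇑f + γ₁) (g₂ ∘ ⇑f + γ₂) (g₃ ∘ ⇑f + γ₃) A C₂) ∧
    (transA n (Equiv.refl ℝ) 0 A = A ∧
      transC2 n (Equiv.refl ℝ) 0 0 0 A C₂ = C₂) :=
  transC2_group_action_general n f fb γ₁ γ₂ γ₃ g₁ g₂ g₃ hf hf' hfb hγ₂ hγ₃ hg₂ hg₃ A C₂
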